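/- arXiv:0911.1154 — 2 statements merged into one kernel-verified Lean document; each statement's English description precedes it below -/
import Mathlib

section
/- Let G be a finite group of order 2^n such that exactly 3/4 of its elements satisfy x^2 = 1, and suppose there is a surjective homomorphism π : G → D_8 onto the dihedral group of order 8. Then the kernel K of π is an elementary abelian 2-group of order 2^{n-3}, and G is isomorphic to the direct product K × D_8. -/
/-!
Every `x` with `x ^ 2 = 1` maps into the six elements of `D₈` that square to `1`, whose preimage
has `6 |K| = 3|G|/4` elements; so the hypothesis forces `x ^ 2 = 1 ↔ π x ^ 2 = 1`. In particular
`K` has exponent `2`, and if `k ∈ K` and `π g` squares to `1`, then `k`, `g` and `k * g` all square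
to `1`, so `k` commutes with `g`. These `g` form more than half of `G`, hence `K` is central.
Lifting the reflections `sr 0` and `sr 1` to involutions `a` and `c` yields a homomorphic section
`r 1 ↦ a * c`, `sr 0 ↦ a` of `π`, and a split surjection with central kernel is a direct product.
-/

theorem commute_of_sq_eq_one {G : Type*} [Group G] {a b : G} (ha : a ^ 2 = 1) (hb : b ^ 2 = 1)
    (hab : (a * b) ^ 2 = 1) : Commute a b := by
  have inv {x : G} (hx : x ^ 2 = 1) : x⁻¹ = x := inv_eq_of_mul_eq_one_right (by rwa [← sq])
  calc a * b = (a * b)⁻¹ := (inv hab).symm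
    _ = b * a := by rw [mul_inv_rev, inv ha, inv hb]

theorem Subgroup.eq_top_of_card_lt_two_mul {G : Type*} [Group G] [Finite G] (H : Subgroup G)
    (h : Nat.card G < 2 * Nat.card H) : H = ⊤ := by
  by_contra hH
  have := H.one_lt_index_of_ne_top hH
  have := H.card_mul_index
  nlinarith

section PowVal

variable {n : ℕ} [NeZero n] {G : Type*} [Group G] {a b : G}

theorem pow_zmod_val_add (hb : b ^ n = 1) (i j : ZMod n) :
    b ^ (i + j).val = b ^ i.val * b ^ j.val := by
  rw [ZMod.val_add, ← pow_eq_pow_mod _ hb, pow_add]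

theorem pow_zmod_val_sub (hb : b ^ n = 1) (i j : ZMod n) :
    b ^ (j - i).val = (b ^ i.val)⁻¹ * b ^ j.val := by
  have hneg : b ^ (-i).val = (b ^ i.val)⁻¹ := eq_inv_of_mul_eq_one_left <| by
    rw [← pow_zmod_val_add hb, neg_add_cancel, ZMod.val_zero, pow_zero]
  rw [sub_eq_neg_add, pow_zmod_val_add hb, hneg]

end PowVal

theorem mul_pow_mul_eq_inv_pow {G : Type*} [Group G] {a b : G} (ha : a * a = 1)
    (hab : a * b * a = b⁻¹) (k : ℕ) : a * b ^ k * a = (b ^ k)⁻¹ := by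
  have ha' : a⁻¹ = a := inv_eq_of_mul_eq_one_right ha
  calc a * b ^ k * a = (a * b * a⁻¹) ^ k := by rw [conj_pow, ha']
    _ = (b ^ k)⁻¹ := by rw [ha', hab, inv_pow]

namespace MonoidHom

variable {G H : Type*} [Group G] [Group H]

theorem card_preimage_of_surjective (π : G →* H) (hπ : Function.Surjective π) (T : Set H) :
    Nat.card (π ⁻¹' T) = Nat.card π.ker * Nat.card T := by
  let e := QuotientGroup.quotientKerEquivOfSurjective π hπ
  have hpre : π ⁻¹' T = QuotientGroup.mk ⁻¹' (e ⁻¹' T) := rfl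
  rw [hpre, QuotientGroup.card_preimage_mk,
    Nat.card_preimage_of_injective e.injective (by simp [e.surjective.range_eq])]

theorem sq_eq_one_of_card_le [Finite G] (π : G →* H) (hπ : Function.Surjective π)
    (h : Nat.card π.ker * Nat.card {y : H // y ^ 2 = 1} ≤ Nat.card {x : G // x ^ 2 = 1})
    {g : G} (hg : π g ^ 2 = 1) : g ^ 2 = 1 := by
  have hsub : {x : G | x ^ 2 = 1} ⊆ π ⁻¹' {y | y ^ 2 = 1} := fun x hx => by
    simp only [Set.mem_preimage, Set.mem_ofPred_eq, ← map_pow, hx.out, map_one]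
  have heq := Set.eq_of_subset_of_ncard_le hsub (by
    rw [← Nat.card_coe_set_eq, ← Nat.card_coe_set_eq, card_preimage_of_surjective π hπ]
    exact h) (Set.toFinite _)
  exact (heq ▸ hg : g ∈ {x : G | x ^ 2 = 1})

theorem ker_le_center_of_sq_eq_one [Finite G] (π : G →* H) (hπ : Function.Surjective π)
    (hsq : ∀ g, π g ^ 2 = 1 → g ^ 2 = 1)
    (h : Nat.card G < 2 * (Nat.card π.ker * Nat.card {y : H // y ^ 2 = 1})) :
    π.ker ≤ Subgroup.center G := by
  refine Subgroup.centralizer_eq_top_iff_subset.mp (Subgroup.eq_top_of_card_lt_two_mul _ ?_)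
  refine h.trans_le (Nat.mul_le_mul_left 2 ?_)
  refine (card_preimage_of_surjective π hπ {y : H | y ^ 2 = 1}).ge.trans ?_
  refine Nat.card_mono (Set.toFinite _) fun g hg k hk => ?_
  have hk1 : π k = 1 := hk
  refine (commute_of_sq_eq_one (hsq k (by rw [hk1, one_pow])) (hsq g hg) (hsq _ ?_)).eq
  rwa [map_mul, hk1, one_mul]

noncomputable def kerProdMulEquivOfRightInverse (π : G →* H) (φ : H →* G)
    (hφ : Function.RightInverse φ π) (hK : π.ker ≤ Subgroup.center G) : π.ker × H ≃* G :=
  MulEquiv.ofBijective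
    (π.ker.subtype.noncommCoprod φ fun k _ => (Subgroup.mem_center_iff.mp (hK k.2) _).symm) <| by
    constructor
    · rintro ⟨k₁, d₁⟩ ⟨k₂, d₂⟩ h
      replace h : (k₁ : G) * φ d₁ = k₂ * φ d₂ := h
      have hd : d₁ = d₂ := by
        simpa [hφ _, MonoidHom.mem_ker.mp k₁.2, MonoidHom.mem_ker.mp k₂.2] using congrArg π h
      subst hd
      exact Prod.ext (Subtype.ext (mul_right_cancel h)) rfl
    · intro g
      refine ⟨(⟨g * (φ (π g))⁻¹, ?_⟩, π g), inv_mul_cancel_right g (φ (π g))⟩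
      rw [MonoidHom.mem_ker, map_mul, map_inv, hφ, mul_inv_cancel]

end MonoidHom

namespace DihedralGroup

variable {n : ℕ} [NeZero n] {G : Type*} [Group G]

def lift {a b : G} (ha : a * a = 1) (hb : b ^ n = 1) (hab : a * b * a = b⁻¹) :
    DihedralGroup n →* G where
  toFun
    | r i => b ^ i.val
    | sr i => a * b ^ i.val
  map_one' := show b ^ (0 : ZMod n).val = 1 by rw [ZMod.val_zero, pow_zero]
  map_mul' := by
    have hconj (k : ℕ) : b ^ k * a = a * (b ^ k)⁻¹ := by
      rw [← mul_pow_mul_eq_inv_pow ha hab, ← mul_assoc, ← mul_assoc, ha, one_mul]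
    rintro (i | i) (j | j)
    · exact pow_zmod_val_add hb i j
    · show a * b ^ (j - i).val = b ^ i.val * (a * b ^ j.val)
      rw [← mul_assoc, hconj, pow_zmod_val_sub hb, mul_assoc]
    · show a * b ^ (i + j).val = a * b ^ i.val * b ^ j.val
      rw [pow_zmod_val_add hb, mul_assoc]
    · show b ^ (j - i).val = a * b ^ i.val * (a * b ^ j.val)
      rw [pow_zmod_val_sub hb, ← mul_assoc, mul_pow_mul_eq_inv_pow ha hab]

theorem exists_rightInverse_of_sq_eq_one (hn : Even n) (π : G →* DihedralGroup n)
    (hπ : Function.Surjective π) (hsq : ∀ g, π g ^ 2 = 1 → g ^ 2 = 1) :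
    ∃ φ : DihedralGroup n →* G, Function.RightInverse φ π := by
  have mul_self_of_map_sr {x : G} {i : ZMod n} (hx : π x = sr i) : x * x = 1 := by
    rw [← sq]; exact hsq x (by rw [hx, sq, sr_mul_self])
  obtain ⟨a, ha⟩ := hπ (sr 0)
  obtain ⟨c, hc⟩ := hπ (sr 1)
  have haa := mul_self_of_map_sr ha
  have hcc := mul_self_of_map_sr hc
  have hπb : π (a * c) = r 1 := by rw [map_mul, ha, hc, sr_mul_sr, sub_zero]
  -- for `n = 2 * m`, `(a * c) ^ m` lifts the involution `r m`
  have hb : (a * c) ^ n = 1 := by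
    obtain ⟨m, rfl⟩ := hn
    rw [← two_mul, pow_mul', hsq]
    rw [map_pow, hπb, r_one_pow, sq, r_mul_r, ← Nat.cast_add, ZMod.natCast_self, r_zero]
  have hab : a * (a * c) * a = (a * c)⁻¹ := by
    rw [← mul_assoc, haa, one_mul, mul_inv_rev, inv_eq_of_mul_eq_one_right haa,
      inv_eq_of_mul_eq_one_right hcc]
  refine ⟨lift haa hb hab, ?_⟩
  rintro (i | i)
  · show π ((a * c) ^ i.val) = r i
    rw [map_pow, hπb, r_one_pow, ZMod.natCast_zmod_val]
  · show π (a * (a * c) ^ i.val) = sr i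
    rw [map_mul, map_pow, ha, hπb, r_one_pow, ZMod.natCast_zmod_val, sr_mul_r, zero_add]

theorem card_sq_eq_one_four : Nat.card {d : DihedralGroup 4 // d ^ 2 = 1} = 6 := by
  rw [Nat.card_eq_fintype_card]; decide

end DihedralGroup

theorem stmt_16 (G : Type*) [Group G] [Finite G] (n : ℕ)
    (hcard : Nat.card G = 2 ^ n)
    (hj : 4 * Nat.card {x : G // x ^ 2 = 1} = 3 * Nat.card G)
    (π : G →* DihedralGroup 4) (hπ : Function.Surjective π) :
    (∀ x ∈ π.ker, x ^ 2 = 1) ∧ Nat.card π.ker = 2 ^ (n - 3) ∧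
      Nonempty (G ≃* π.ker × DihedralGroup 4) := by
  have hG : Nat.card G = Nat.card π.ker * 8 := by
    rw [← Nat.card_univ, ← Set.preimage_univ (f := π), π.card_preimage_of_surjective hπ,
      Nat.card_univ, DihedralGroup.nat_card]
  have hK0 : 0 < Nat.card π.ker := Nat.card_pos
  have hsq : ∀ g, π g ^ 2 = 1 → g ^ 2 = 1 := fun g =>
    π.sq_eq_one_of_card_le hπ (by rw [DihedralGroup.card_sq_eq_one_four]; omega)
  obtain ⟨φ, hφ⟩ := DihedralGroup.exists_rightInverse_of_sq_eq_one (by decide) π hπ hsq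
  have hK := π.ker_le_center_of_sq_eq_one hπ hsq
    (by rw [DihedralGroup.card_sq_eq_one_four]; omega)
  refine ⟨fun x hx => hsq x (by rw [MonoidHom.mem_ker.mp hx, one_pow]), ?_,
    ⟨(π.kerProdMulEquivOfRightInverse φ hφ hK).symm⟩⟩
  have h3 : 3 ≤ n := by
    by_contra hn
    have := Nat.pow_le_pow_right two_pos (show n ≤ 2 by omega)
    omega
  apply Nat.eq_of_mul_eq_mul_right (show 0 < 2 ^ 3 by norm_num)
  rw [← pow_add, Nat.sub_add_cancel h3, ← hcard, hG]
  norm_num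
end

section
/- If G is a finite group in which exactly 3/4 of the elements satisfy x^2 = 1, then G is isomorphic to D_8 × (C_2)^{n-3} for some n ≥ 3, where D_8 is the dihedral group of order 8; in particular |G| = 2^n. -/
/-!
Let `T` be the set of involutions, so `|T| = 3|G|/4`. If `x ∈ T` and both `g` and `x⁻¹g` lie in
`T`, then `g` commutes with `x`; there are at least `2|T| - |G| = |G|/2` such `g`, so the
centralizer of a non-central involution has index `2` and consists of involutions. The involutions
do not commute pairwise, since otherwise they would form a subgroup of order `3|G|/4`; take
non-commuting involutions `a, b`. Then `Z(G) ⊇ C(a) ∩ C(b)` has index `4`, has exponent `2` and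
contains `z = (ab)² ≠ 1`, so `a, b` generate a dihedral group of order `8`. Writing
`Z(G) = ⟨z⟩ × W` as `𝔽₂`-vector spaces, `D₈ × W → G` is onto, and the orders agree.
-/

open Subgroup

section General

variable {G : Type*} [Group G]

theorem inv_eq_self_of_sq_eq_one {x : G} (hx : x ^ 2 = 1) : x⁻¹ = x :=
  inv_eq_iff_mul_eq_one.2 (by rw [← sq, hx])

theorem commute_of_sq_eq_one_s17 {x y : G} (hx : x ^ 2 = 1) (hy : y ^ 2 = 1)
    (hxy : (x * y) ^ 2 = 1) : Commute x y := by
  rw [Commute, SemiconjBy, ← inv_eq_self_of_sq_eq_one hxy, mul_inv_rev,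
    inv_eq_self_of_sq_eq_one hx, inv_eq_self_of_sq_eq_one hy]

theorem Subgroup.isMulCommutative_of_forall_sq_eq_one {H : Subgroup G}
    (hH : ∀ g ∈ H, g ^ 2 = 1) : IsMulCommutative H :=
  ⟨⟨fun x y => Subtype.ext
    (commute_of_sq_eq_one_s17 (hH x x.2) (hH y y.2) (hH _ (H.mul_mem x.2 y.2))).eq⟩⟩

theorem Subgroup.two_mul_card_le_card_of_lt [Finite G] {H K : Subgroup G} (h : H < K) :
    2 * Nat.card H ≤ Nat.card K := by
  obtain ⟨c, hc⟩ := card_dvd_of_le h.le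
  have hc0 : c ≠ 0 := by
    rintro rfl
    exact (Nat.card_pos (α := K)).ne' (by rw [hc, mul_zero])
  have hc1 : c ≠ 1 := by
    rintro rfl
    exact h.ne (eq_of_le_of_card_ge h.le (by rw [hc, mul_one]))
  rw [hc, mul_comm]
  exact Nat.mul_le_mul_left _ (by omega)

theorem Subgroup.eq_top_of_lt_of_index_eq_two {H K : Subgroup G} (hH : H.index = 2)
    (h : H < K) : K = ⊤ := by
  have hrel : H.relIndex K * K.index = 2 := by rw [relIndex_mul_index h.le, hH]
  have hne : H.relIndex K ≠ 1 := fun h1 => h.not_ge (relIndex_eq_one.1 h1)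
  rw [← index_eq_one]
  rcases (Nat.dvd_prime Nat.prime_two).1 (Dvd.intro_left _ hrel) with h1 | h2
  · exact h1
  · rw [h2] at hrel; omega

theorem Subgroup.inf_centralizer_le_center {H : Subgroup G} [IsMulCommutative H]
    (hH : H.index = 2) {b : G} (hb : b ∉ H) : H ⊓ centralizer {b} ≤ center G := by
  intro e ⟨heH, heb⟩
  have hHe : H ≤ centralizer {e} :=
    (le_centralizer_iff_isMulCommutative.2 ‹_›).trans
      (centralizer_le (Set.singleton_subset_iff.2 heH))
  have hbe : b ∈ centralizer {e} :=
    mem_centralizer_singleton_iff.2 (mem_centralizer_singleton_iff.1 heb).symm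
  have htop := eq_top_of_lt_of_index_eq_two hH
    (SetLike.lt_iff_le_and_exists.2 ⟨hHe, b, hbe, hb⟩)
  rw [centralizer_eq_top_iff_subset, Set.singleton_subset_iff] at htop
  exact htop

theorem sq_mul_mem_centralizer_inf_centralizer {a b : G} (ha : a ^ 2 = 1) (hb : b ^ 2 = 1)
    (hCa : (centralizer {a}).index = 2) (hCb : (centralizer {b}).index = 2) :
    (a * b) ^ 2 ∈ centralizer {a} ⊓ centralizer {b} := by
  have hba : (a * b) ^ 2 = ((b * a) ^ 2)⁻¹ := by
    rw [← inv_pow, mul_inv_rev, inv_eq_self_of_sq_eq_one ha, inv_eq_self_of_sq_eq_one hb]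
  refine mem_inf.2 ⟨?_, ?_⟩
  · rw [sq]; exact mul_self_mem_of_index_two hCa _
  · rw [hba, sq]; exact inv_mem (mul_self_mem_of_index_two hCb _)

theorem Subgroup.card_le_index_mul_index_mul_card_inf [Finite G] (H K : Subgroup G) :
    Nat.card G ≤ H.index * K.index * Nat.card ↥(H ⊓ K) := by
  rw [← (H ⊓ K).card_mul_index, mul_comm]
  exact Nat.mul_le_mul_right _ index_inf_le

end General

section Counting

open scoped Pointwise

variable {G : Type*} [Group G] [Finite G]

theorem index_centralizer_eq_two_and_sq_eq_one_of_notMem_center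
    (hj : 3 * Nat.card G ≤ 4 * Nat.card {x : G // x ^ 2 = 1})
    {x : G} (hx : x ^ 2 = 1) (hxZ : x ∉ center G) :
    (centralizer {x}).index = 2 ∧ ∀ g ∈ centralizer {x}, g ^ 2 = 1 := by
  set T : Set G := {g | g ^ 2 = 1}
  set C := centralizer {x}
  have hjT : Nat.card {x : G // x ^ 2 = 1} = T.ncard := Nat.card_coe_set_eq T
  have hTC : T ∩ x • T ⊆ C := by
    rintro g ⟨hg, hxg⟩
    rw [Set.mem_smul_set_iff_inv_smul_mem] at hxg
    have hx' : x⁻¹ ^ 2 = 1 := by rw [inv_pow, hx, inv_one]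
    exact mem_centralizer_singleton_iff.2
      (Commute.inv_left_iff.1 (commute_of_sq_eq_one_s17 hx' hg hxg)).eq.symm
  have hCtop : C < ⊤ := by
    refine lt_top_iff_ne_top.2 fun h => hxZ ?_
    rw [centralizer_eq_top_iff_subset, Set.singleton_subset_iff] at h
    exact h
  have hC : 2 * Nat.card C ≤ Nat.card G := by
    simpa only [card_top] using two_mul_card_le_card_of_lt hCtop
  have hunion := Set.ncard_inter_add_ncard_union T (x • T)
  rw [Set.ncard_smul_set] at hunion
  have hCcard : (C : Set G).ncard = Nat.card C := (Nat.card_coe_set_eq _).symm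
  have hle := Set.ncard_le_ncard hTC
  have hU := Set.ncard_le_card (T ∪ x • T)
  have hCeq : T ∩ x • T = C := Set.eq_of_subset_of_ncard_le hTC (by omega)
  refine ⟨?_, fun g hg => (hCeq ▸ hg : g ∈ T ∩ x • T).1⟩
  have hCpos : 0 < Nat.card C := Nat.card_pos
  have hCindex := C.card_mul_index
  exact Nat.eq_of_mul_eq_mul_left hCpos (by omega)

theorem exists_sq_eq_one_not_commute
    (hj : 4 * Nat.card {x : G // x ^ 2 = 1} = 3 * Nat.card G) :
    ∃ a b : G, a ^ 2 = 1 ∧ b ^ 2 = 1 ∧ ¬Commute a b := by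
  by_contra! h
  let T : Subgroup G :=
    { carrier := {g | g ^ 2 = 1}
      one_mem' := one_pow 2
      mul_mem' := fun {p q} (hp : p ^ 2 = 1) (hq : q ^ 2 = 1) =>
        show (p * q) ^ 2 = 1 by rw [(h p q hp hq).mul_pow, hp, hq, one_mul]
      inv_mem' := fun {p} (hp : p ^ 2 = 1) => show p⁻¹ ^ 2 = 1 by rw [inv_pow, hp, inv_one] }
  have hT : Nat.card T = Nat.card {x : G // x ^ 2 = 1} := rfl
  have hG : 0 < Nat.card G := Nat.card_pos
  have hTtop : T < ⊤ := by
    refine lt_top_iff_ne_top.2 fun htop => ?_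
    rw [← card_eq_iff_eq_top, hT] at htop
    omega
  have := two_mul_card_le_card_of_lt hTtop
  rw [card_top] at this
  omega

end Counting

theorem exists_pi_zmod_two_hom_of_sq_eq_one {A : Type*} [CommGroup A] [Finite A]
    (hA : ∀ x : A, x ^ 2 = 1) {z : A} (hz : z ≠ 1) :
    ∃ (k : ℕ) (χ : (Fin k → Multiplicative (ZMod 2)) →* A),
      Nat.card A = 2 ^ (k + 1) ∧ ∀ x : A, ∃ w, x = χ w ∨ x = z * χ w := by
  let _ : Module (ZMod 2) (Additive A) :=
    AddCommGroup.zmodModule fun x => congrArg Additive.ofMul (hA x.toMul)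
  obtain ⟨W, hW⟩ := (Submodule.span (ZMod 2) {Additive.ofMul z}).exists_isCompl
  set k := Module.finrank (ZMod 2) W
  let e : (Fin k → ZMod 2) ≃ₗ[ZMod 2] W := (Module.finBasis (ZMod 2) W).equivFun.symm
  let χ : (Fin k → Multiplicative (ZMod 2)) →* A :=
    (AddMonoidHom.toMultiplicativeLeft (W.subtype ∘ₗ e.toLinearMap).toAddMonoidHom).comp
      (MulEquiv.piMultiplicative _).symm.toMonoidHom
  have hχ (w : W) : χ (MulEquiv.piMultiplicative _ (Multiplicative.ofAdd (e.symm w))) =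
      (w : Additive A).toMul := by
    simp [χ]
  refine ⟨k, χ, ?_, fun x => ?_⟩
  · have hz' : Additive.ofMul z ≠ 0 := hz
    have hrank := Submodule.finrank_add_eq_of_isCompl hW
    rw [finrank_span_singleton hz'] at hrank
    have := Fintype.ofFinite (Additive A)
    rw [Nat.card_congr (Additive.ofMul (α := A)), Nat.card_eq_fintype_card,
      Module.card_eq_pow_finrank (K := ZMod 2), ZMod.card, ← hrank, add_comm]
  · have hx : Additive.ofMul x ∈ Submodule.span (ZMod 2) {Additive.ofMul z} ⊔ W := by
      rw [hW.sup_eq_top]; trivial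
    obtain ⟨y, hy, w, hw, hyw⟩ := Submodule.mem_sup.1 hx
    obtain ⟨c, rfl⟩ := Submodule.mem_span_singleton.1 hy
    refine ⟨MulEquiv.piMultiplicative _ (Multiplicative.ofAdd (e.symm ⟨w, hw⟩)), ?_⟩
    rw [hχ]
    obtain rfl | rfl : c = 0 ∨ c = 1 := (by decide : ∀ c : ZMod 2, c = 0 ∨ c = 1) c
    · rw [zero_smul, zero_add] at hyw
      exact .inl (congrArg Additive.toMul hyw.symm)
    · rw [one_smul] at hyw
      exact .inr (congrArg Additive.toMul hyw.symm)

section Dihedral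

variable {G : Type*} [Group G]

def dihedralGroupHom {n : ℕ} [NeZero n] (a b : G) (ha : a ^ 2 = 1) (hb : b ^ 2 = 1)
    (hab : (a * b) ^ n = 1) : DihedralGroup n →* G :=
  have hρ (i j : ZMod n) : (a * b) ^ (i + j).val = (a * b) ^ i.val * (a * b) ^ j.val := by
    rw [ZMod.val_add, ← pow_eq_pow_mod _ hab, pow_add]
  have hρinv (i : ZMod n) : (a * b) ^ (-i).val = ((a * b) ^ i.val)⁻¹ :=
    eq_inv_of_mul_eq_one_left (by rw [← hρ, neg_add_cancel, ZMod.val_zero, pow_zero])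
  have hconj (m : ℕ) : (a * b) ^ m * a = a * ((a * b) ^ m)⁻¹ := by
    have : SemiconjBy a (a * b)⁻¹ (a * b) := by
      rw [SemiconjBy, mul_inv_rev, inv_eq_self_of_sq_eq_one ha, inv_eq_self_of_sq_eq_one hb,
        mul_assoc]
    rw [← inv_pow, (this.pow_right m).eq]
  { toFun := fun
      | .r i => (a * b) ^ i.val
      | .sr i => a * (a * b) ^ i.val
    map_one' := show (a * b) ^ (0 : ZMod n).val = 1 by rw [ZMod.val_zero, pow_zero]
    map_mul' := by
      rintro (i | i) (j | j)
      · simp only [DihedralGroup.r_mul_r, hρ]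
      · simp only [DihedralGroup.r_mul_sr]
        rw [sub_eq_neg_add, hρ, hρinv, ← mul_assoc, ← mul_assoc, hconj]
      · simp only [DihedralGroup.sr_mul_r, hρ, mul_assoc]
      · simp only [DihedralGroup.sr_mul_sr]
        rw [sub_eq_neg_add, hρ, hρinv, mul_assoc, ← mul_assoc _ a, hconj, ← mul_assoc,
          ← mul_assoc, ← sq, ha, one_mul] }

@[simp]
theorem dihedralGroupHom_r {n : ℕ} [NeZero n] (a b : G) (ha : a ^ 2 = 1) (hb : b ^ 2 = 1)
    (hab : (a * b) ^ n = 1) (i : ZMod n) :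
    dihedralGroupHom a b ha hb hab (.r i) = (a * b) ^ i.val := rfl

@[simp]
theorem dihedralGroupHom_sr {n : ℕ} [NeZero n] (a b : G) (ha : a ^ 2 = 1) (hb : b ^ 2 = 1)
    (hab : (a * b) ^ n = 1) (i : ZMod n) :
    dihedralGroupHom a b ha hb hab (.sr i) = a * (a * b) ^ i.val := rfl

end Dihedral

section Structure

variable {G : Type*} [Group G] [Finite G]

open scoped IsMulCommutative in
theorem exists_mulEquiv_dihedralGroup_prod {a b : G} (ha : a ^ 2 = 1)
    (hb : b ^ 2 = 1) (hab : ¬Commute a b) (hZ : ∀ g ∈ center G, g ^ 2 = 1)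
    (hz : (a * b) ^ 2 ∈ center G) (hcard : Nat.card G ≤ 4 * Nat.card (center G)) :
    ∃ k : ℕ, Nat.card G = 2 ^ (k + 3) ∧
      Nonempty (G ≃* DihedralGroup 4 × (Fin k → Multiplicative (ZMod 2))) := by
  have hz1 : (⟨(a * b) ^ 2, hz⟩ : center G) ≠ 1 := fun h =>
    hab (commute_of_sq_eq_one_s17 ha hb (congrArg Subtype.val h))
  obtain ⟨k, χ, hZcard, hχ⟩ :=
    exists_pi_zmod_two_hom_of_sq_eq_one (fun g : center G => Subtype.ext (hZ g g.2)) hz1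
  have hab4 : (a * b) ^ 4 = 1 := by rw [show 4 = 2 * 2 from rfl, pow_mul, hZ _ hz]
  let ψ := dihedralGroupHom a b ha hb hab4
  let Φ := ψ.noncommCoprod ((center G).subtype.comp χ)
    fun d w => mem_center_iff.1 (χ w).2 (ψ d)
  have hΦ (d w) : Φ (d, w) = ψ d * χ w := rfl
  have haΦ : a ∈ Φ.range := ⟨(.sr 0, 1), by simp [hΦ, ψ]⟩
  have hρΦ : a * b ∈ Φ.range := ⟨(.r 1, 1), by simp [hΦ, ψ, ZMod.val_one'']⟩
  have hbΦ : b ∈ Φ.range := by simpa [← mul_assoc, ← sq, ha] using mul_mem haΦ hρΦ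
  have hZΦ : center G ≤ Φ.range := by
    intro g hg
    obtain ⟨w, hw | hw⟩ := hχ ⟨g, hg⟩
    · exact ⟨(1, w), by simp [hΦ, ← hw]⟩
    · refine ⟨(.r 2, w), ?_⟩
      rw [hΦ, dihedralGroupHom_r, show (2 : ZMod 4).val = 2 from rfl]
      exact (congrArg Subtype.val hw).symm
  have hZ_lt : center G < Φ.range ⊓ centralizer {a} :=
    SetLike.lt_iff_le_and_exists.2 ⟨le_inf hZΦ (center_le_centralizer _), a,
      mem_inf.2 ⟨haΦ, mem_centralizer_singleton_iff.2 rfl⟩,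
      fun h => hab (mem_center_iff.1 h b).symm⟩
  have hCa_lt : Φ.range ⊓ centralizer {a} < Φ.range :=
    SetLike.lt_iff_le_and_exists.2 ⟨inf_le_left, b, hbΦ,
      fun h => hab (mem_centralizer_singleton_iff.1 h.2).symm⟩
  have hΦcard : 4 * Nat.card (center G) ≤ Nat.card Φ.range := by
    have := two_mul_card_le_card_of_lt hZ_lt
    have := two_mul_card_le_card_of_lt hCa_lt
    omega
  have hGcard : Nat.card G = 4 * Nat.card (center G) :=
    le_antisymm hcard (hΦcard.trans (card_le_card_group _))
  have hdom : Nat.card (DihedralGroup 4 × (Fin k → Multiplicative (ZMod 2))) = Nat.card G := by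
    simp [DihedralGroup.card, hGcard, hZcard]
    ring
  have hsurj : Function.Surjective Φ := MonoidHom.range_eq_top.1 <|
    eq_top_of_card_eq _ (le_antisymm (card_le_card_group _) (hGcard ▸ hΦcard))
  refine ⟨k, by rw [hGcard, hZcard]; ring, ⟨(MulEquiv.ofBijective Φ ?_).symm⟩⟩
  exact (Nat.bijective_iff_surjective_and_card Φ).2 ⟨hsurj, hdom⟩

end Structure

theorem stmt_17 (G : Type*) [Group G] [Finite G]
    (hj : 4 * Nat.card {x : G // x ^ 2 = 1} = 3 * Nat.card G) :
    ∃ n : ℕ, 3 ≤ n ∧ Nat.card G = 2 ^ n ∧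
      Nonempty (G ≃* DihedralGroup 4 × (Fin (n - 3) → Multiplicative (ZMod 2))) := by
  obtain ⟨a, b, ha, hb, hab⟩ := exists_sq_eq_one_not_commute hj
  obtain ⟨hCa, hCa_sq⟩ := index_centralizer_eq_two_and_sq_eq_one_of_notMem_center hj.ge ha
    fun h => hab (mem_center_iff.1 h b).symm
  obtain ⟨hCb, -⟩ := index_centralizer_eq_two_and_sq_eq_one_of_notMem_center hj.ge hb
    fun h => hab (mem_center_iff.1 h a)
  have := isMulCommutative_of_forall_sq_eq_one hCa_sq
  have hinf : centralizer {a} ⊓ centralizer {b} ≤ center G :=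
    inf_centralizer_le_center hCa fun h => hab (mem_centralizer_singleton_iff.1 h).symm
  have hcard : Nat.card G ≤ 4 * Nat.card (center G) :=
    calc Nat.card G ≤ 2 * 2 * Nat.card ↥(centralizer {a} ⊓ centralizer {b}) := by
          simpa only [hCa, hCb] using
            card_le_index_mul_index_mul_card_inf (centralizer {a}) (centralizer {b})
      _ ≤ 4 * Nat.card (center G) := Nat.mul_le_mul_left _ (card_le_of_le hinf)
  obtain ⟨k, hk, e⟩ := exists_mulEquiv_dihedralGroup_prod ha hb hab
    (fun g hg => hCa_sq g (center_le_centralizer _ hg))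
    (hinf (sq_mul_mem_centralizer_inf_centralizer ha hb hCa hCb)) hcard
  exact ⟨k + 3, by omega, hk, e⟩
end
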